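/- arXiv:2003.09826 — 5 statements merged into one kernel-verified Lean document; each statement's English description precedes it below -/
import Mathlib

section
/- For positive reals a, b and α ∈ [0,1], with r₀ = min{α, 1-α}, one has a^α b^(1-α) ≤ α a + (1-α) b − r₀ (√a − √b)². -/
/-!
For `α ≤ 1/2` write `a ^ α * b ^ (1 - α) = (√a √b) ^ (2α) * b ^ (1 - 2α)`; the weighted AM-GM
inequality with weights `2α, 1 - 2α` bounds this by `2α √a √b + (1 - 2α) b`, which is exactly
`α a + (1 - α) b - α (√a - √b) ^ 2`. The case `α ≥ 1/2` follows by swapping `a, b` and `α, 1 - α`.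
-/

open Real

lemma rpow_mul_rpow_one_sub_le_sub_mul_sq_sqrt {a b α : ℝ} (ha : 0 ≤ a) (hb : 0 ≤ b)
    (hα₀ : 0 ≤ α) (hα : α ≤ 1 / 2) :
    a ^ α * b ^ (1 - α) ≤ α * a + (1 - α) * b - α * (√a - √b) ^ 2 := by
  have hsqrt_rpow {x : ℝ} (hx : 0 ≤ x) : √x ^ (2 * α) = x ^ α := by
    rw [rpow_mul (sqrt_nonneg x), rpow_two, sq_sqrt hx]
  have hsplit : b ^ (1 - α) = b ^ α * b ^ (1 - 2 * α) := by
    rw [← rpow_add' hb (by linarith)]; congr 1; ring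
  have young := geom_mean_le_arith_mean2_weighted (w₁ := 2 * α) (w₂ := 1 - 2 * α)
    (p₁ := √a * √b) (p₂ := b) (by linarith) (by linarith) (by positivity) hb (by ring)
  calc a ^ α * b ^ (1 - α) = (√a * √b) ^ (2 * α) * b ^ (1 - 2 * α) := by
        rw [mul_rpow (sqrt_nonneg a) (sqrt_nonneg b), hsqrt_rpow ha, hsqrt_rpow hb, hsplit]; ring
    _ ≤ 2 * α * (√a * √b) + (1 - 2 * α) * b := young
    _ = α * a + (1 - α) * b - α * (√a - √b) ^ 2 := by
        rw [sub_sq, sq_sqrt ha, sq_sqrt hb]; ring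

/-- Kittaneh's refinement of the Young inequality for scalars. -/
theorem kittaneh_refined_young (a b α : ℝ) (ha : 0 < a) (hb : 0 < b)
    (hα : α ∈ Set.Icc (0 : ℝ) 1) :
    a ^ α * b ^ (1 - α) ≤
      α * a + (1 - α) * b - min α (1 - α) * (Real.sqrt a - Real.sqrt b) ^ 2 := by
  obtain ⟨hα₀, hα₁⟩ := hα
  rcases le_total α (1 / 2) with hα | hα
  · rw [min_eq_left (by linarith)]
    exact rpow_mul_rpow_one_sub_le_sub_mul_sq_sqrt ha.le hb.le hα₀ hα
  · rw [min_eq_right (by linarith)]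
    calc a ^ α * b ^ (1 - α) = b ^ (1 - α) * a ^ (1 - (1 - α)) := by rw [sub_sub_cancel, mul_comm]
      _ ≤ (1 - α) * b + (1 - (1 - α)) * a - (1 - α) * (√b - √a) ^ 2 :=
        rpow_mul_rpow_one_sub_le_sub_mul_sq_sqrt hb.le ha.le (by linarith) (by linarith)
      _ = α * a + (1 - α) * b - (1 - α) * (√a - √b) ^ 2 := by ring
end

section
/- Let A be a positive bounded operator on a complex Hilbert space H and x ∈ H. If p ≥ 1 then ⟨A^p x, x⟩ ≥ ‖x‖^(2(1-p)) ⟨A x, x⟩^p. -/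
open scoped InnerProductSpace

/-! The function `t ↦ t ^ p` (`p ≥ 1`) lies above each of its tangent lines on `[0, ∞)`:
`t ^ p ≥ p s ^ (p - 1) t + (1 - p) s ^ p`. The functional calculus turns this into the operator
inequality `A ^ p ≥ p s ^ (p - 1) A + (1 - p) s ^ p`; evaluating the quadratic forms at `x` and
choosing the point of tangency `s = ⟨A x, x⟩ / ‖x‖ ^ 2` gives the bound. -/

theorem Real.tangent_le_rpow {s t p : ℝ} (hs : 0 ≤ s) (ht : 0 ≤ t) (hp : 1 ≤ p) :
    p * s ^ (p - 1) * t + (1 - p) * s ^ p ≤ t ^ p := by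
  have hp0 : 0 < p := by linarith
  have young := Real.geom_mean_le_arith_mean2_weighted (w₁ := p⁻¹) (w₂ := 1 - p⁻¹)
    (p₁ := t ^ p) (p₂ := s ^ p) (by positivity) (sub_nonneg.2 (inv_le_one_of_one_le₀ hp))
    (by positivity) (by positivity) (by ring)
  rw [← Real.rpow_mul ht, ← Real.rpow_mul hs, mul_inv_cancel₀ hp0.ne', Real.rpow_one,
    show p * (1 - p⁻¹) = p - 1 by field_simp] at young
  have := mul_le_mul_of_nonneg_left young hp0.le
  field_simp at this
  linarith

section CFC

variable {A : Type*} [PartialOrder A] [Ring A] [StarRing A] [TopologicalSpace A]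
  [StarOrderedRing A] [Algebra ℝ A] [ContinuousFunctionalCalculus ℝ A IsSelfAdjoint]
  [NonnegSpectrumClass ℝ A] [IsSemitopologicalRing A] [T2Space A]

theorem CFC.tangent_le_rpow {a : A} (ha : 0 ≤ a) {s p : ℝ} (hs : 0 ≤ s) (hp : 1 ≤ p) :
    (p * s ^ (p - 1)) • a + algebraMap ℝ A ((1 - p) * s ^ p) ≤ a ^ p := by
  have ha' : IsSelfAdjoint a := .of_nonneg ha
  have hlin : (p * s ^ (p - 1)) • a + algebraMap ℝ A ((1 - p) * s ^ p)
      = cfc (fun t : ℝ => p * s ^ (p - 1) * t + (1 - p) * s ^ p) a := by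
    rw [cfc_add .., cfc_const_mul_id .., cfc_const ..]
  rw [hlin, CFC.rpow_eq_cfc_real ha]
  exact cfc_mono (fun t ht => Real.tangent_le_rpow hs (spectrum_nonneg_of_nonneg ha ht) hp)
    (hg := (Real.continuous_rpow_const (by linarith)).continuousOn)

end CFC

theorem ContinuousLinearMap.re_inner_apply_self_mono {𝕜 E : Type*} [RCLike 𝕜]
    [NormedAddCommGroup E] [InnerProductSpace 𝕜 E]
    {S T : E →L[𝕜] E} (h : S ≤ T) (x : E) : RCLike.re ⟪S x, x⟫_𝕜 ≤ RCLike.re ⟪T x, x⟫_𝕜 := by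
  simpa [inner_sub_left] using h.re_inner_nonneg_left x

theorem ContinuousLinearMap.re_inner_smul_add_algebraMap_apply {H : Type*} [NormedAddCommGroup H]
    [InnerProductSpace ℂ H] (T : H →L[ℂ] H) (a b : ℝ) (x : H) :
    (⟪(a • T + algebraMap ℝ (H →L[ℂ] H) b) x, x⟫_ℂ).re = a * (⟪T x, x⟫_ℂ).re + b * ‖x‖ ^ 2 := by
  simp [Algebra.algebraMap_eq_smul_one, ← Complex.ofReal_pow]

/-- McCarthy inequality: for a positive operator `A` and `p ≥ 1`,
`⟨A^p x, x⟩ ≥ ‖x‖^(2(1-p)) ⟨A x, x⟩^p`. -/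
theorem mccarthy_ge {H : Type*} [NormedAddCommGroup H] [InnerProductSpace ℂ H]
    [CompleteSpace H] (A : H →L[ℂ] H) (hA : 0 ≤ A) (x : H) (p : ℝ) (hp : 1 ≤ p) :
    ‖x‖ ^ (2 * (1 - p)) * (⟪A x, x⟫_ℂ).re ^ p ≤ (⟪(CFC.rpow A p) x, x⟫_ℂ).re := by
  have hp0 : p ≠ 0 := by positivity
  rcases eq_or_ne x 0 with rfl | hx
  · simp [Real.zero_rpow hp0]
  set c := (⟪A x, x⟫_ℂ).re
  have hc : 0 ≤ c := by simpa using hA.re_inner_nonneg_left x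
  have hxpos : 0 < ‖x‖ := norm_pos_iff.2 hx
  set s := c / ‖x‖ ^ 2
  have hs : 0 ≤ s := by positivity
  calc ‖x‖ ^ (2 * (1 - p)) * c ^ p = s ^ p * ‖x‖ ^ 2 := by
        rw [Real.div_rpow hc (by positivity), ← Real.rpow_two, ← Real.rpow_mul hxpos.le,
          mul_sub, mul_one, Real.rpow_sub hxpos]
        ring
    _ = p * s ^ (p - 1) * c + (1 - p) * s ^ p * ‖x‖ ^ 2 := by
        have hcs : c = s * ‖x‖ ^ 2 := (div_mul_cancel₀ c (by positivity)).symm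
        have hsp : s ^ p = s ^ (p - 1) * s := by
          rw [← Real.rpow_add_one' hs (by simpa using hp0), sub_add_cancel]
        rw [hcs, hsp]
        ring
    _ = (⟪((p * s ^ (p - 1)) • A + algebraMap ℝ _ ((1 - p) * s ^ p)) x, x⟫_ℂ).re :=
        (A.re_inner_smul_add_algebraMap_apply _ _ x).symm
    _ ≤ (⟪(CFC.rpow A p) x, x⟫_ℂ).re :=
        ContinuousLinearMap.re_inner_apply_self_mono (CFC.tangent_le_rpow hA hs hp) x
end

section
/- Let A be a positive bounded operator on a complex Hilbert space H and x ∈ H. If 0 < p < 1 then ⟨A^p x, x⟩ ≤ ‖x‖^(2(1-p)) ⟨A x, x⟩^p. -/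
/-!
`t ↦ t ^ p` is concave on `[0, ∞)` for `0 ≤ p ≤ 1`, so it lies below each of its tangent lines:
`t ^ p ≤ (1 - p) l ^ p + p l ^ (p - 1) t` for every `l > 0`. Applying this through the continuous
functional calculus gives the operator inequality `A ^ p ≤ (1 - p) l ^ p + p l ^ (p - 1) A`, and
taking the quadratic form at `x` gives
`⟨A ^ p x, x⟩ ≤ (1 - p) l ^ p ‖x‖² + p l ^ (p - 1) ⟨A x, x⟩`.
Minimizing over `l` (the minimum is at `l = ⟨A x, x⟩ / ‖x‖²`, or approached as `l → 0` when
`⟨A x, x⟩ = 0`) yields `‖x‖ ^ (2 (1 - p)) ⟨A x, x⟩ ^ p`.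
-/

open Filter Topology
open scoped InnerProductSpace

theorem Real.rpow_le_tangent {t l p : ℝ} (ht : 0 ≤ t) (hl : 0 < l) (hp0 : 0 ≤ p) (hp1 : p ≤ 1) :
    t ^ p ≤ (1 - p) * l ^ p + p * l ^ (p - 1) * t := by
  have hamgm : t ^ p * l ^ (1 - p) ≤ p * t + (1 - p) * l :=
    Real.geom_mean_le_arith_mean2_weighted hp0 (by linarith) ht hl.le (by ring)
  have hl_inv : l ^ (p - 1) * l ^ (1 - p) = 1 := by
    rw [← Real.rpow_add hl]; simp
  have hl_mul : l ^ (p - 1) * l = l ^ p := by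
    rw [Real.rpow_sub_one hl.ne']; field_simp
  calc t ^ p = l ^ (p - 1) * (t ^ p * l ^ (1 - p)) := by rw [mul_left_comm, hl_inv, mul_one]
    _ ≤ l ^ (p - 1) * (p * t + (1 - p) * l) := by gcongr
    _ = (1 - p) * l ^ p + p * l ^ (p - 1) * t := by rw [← hl_mul]; ring

theorem Real.le_rpow_mul_rpow_of_forall_le_tangent {X n c p : ℝ} (hn : 0 < n) (hc : 0 ≤ c)
    (hp0 : 0 < p) (h : ∀ l > 0, X ≤ (1 - p) * l ^ p * n + p * l ^ (p - 1) * c) :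
    X ≤ n ^ (1 - p) * c ^ p := by
  rcases hc.eq_or_lt with rfl | hc
  · have hlim : Tendsto (fun l : ℝ => (1 - p) * l ^ p * n) (𝓝[>] 0) (𝓝 0) := by
      have := ((Real.continuousAt_rpow_const 0 p (Or.inr hp0.le)).tendsto.const_mul
        (1 - p)).mul_const n
      simpa [Real.zero_rpow hp0.ne'] using this.mono_left nhdsWithin_le_nhds
    rw [Real.zero_rpow hp0.ne', mul_zero]
    exact ge_of_tendsto hlim (eventually_nhdsWithin_of_forall fun l hl => by simpa using h l hl)
  · have hc_n : c ^ p / n ^ p * n = n ^ (1 - p) * c ^ p := by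
      rw [Real.rpow_sub hn, Real.rpow_one]; field_simp
    have hc_c : (c ^ p / c) / (n ^ p / n) * c = n ^ (1 - p) * c ^ p := by
      rw [Real.rpow_sub hn, Real.rpow_one]; field_simp
    calc X ≤ (1 - p) * (c / n) ^ p * n + p * (c / n) ^ (p - 1) * c := h _ (div_pos hc hn)
      _ = n ^ (1 - p) * c ^ p := by
        rw [Real.div_rpow hc.le hn.le, Real.div_rpow hc.le hn.le, Real.rpow_sub_one hc.ne',
          Real.rpow_sub_one hn.ne', mul_assoc, mul_assoc, hc_n, hc_c]
        ring

namespace CFC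

variable {A : Type*} [PartialOrder A] [Ring A] [StarRing A] [TopologicalSpace A]
  [StarOrderedRing A] [Algebra ℝ A] [ContinuousFunctionalCalculus ℝ A IsSelfAdjoint]
  [NonnegSpectrumClass ℝ A] [IsSemitopologicalRing A] [T2Space A]

theorem rpow_le_tangent {a : A} (ha : 0 ≤ a) {l p : ℝ} (hl : 0 < l) (hp0 : 0 ≤ p)
    (hp1 : p ≤ 1) :
    a ^ p ≤ algebraMap ℝ A ((1 - p) * l ^ p) + (p * l ^ (p - 1)) • a := by
  rw [rpow_eq_cfc_real ha]
  calc cfc (fun t : ℝ => t ^ p) a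
      ≤ cfc (fun t : ℝ => (1 - p) * l ^ p + p * l ^ (p - 1) * t) a :=
        cfc_mono (fun t ht => Real.rpow_le_tangent (spectrum_nonneg_of_nonneg ha ht) hl hp0 hp1)
          (Real.continuous_rpow_const hp0).continuousOn
    _ = algebraMap ℝ A ((1 - p) * l ^ p) + (p * l ^ (p - 1)) • a := by
        rw [cfc_add .., cfc_const .., cfc_const_mul_id ..]

end CFC

namespace ContinuousLinearMap

variable {𝕜 E : Type*} [RCLike 𝕜] [NormedAddCommGroup E] [InnerProductSpace 𝕜 E]

theorem re_inner_le_of_le {S T : E →L[𝕜] E} (h : S ≤ T) (x : E) :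
    RCLike.re ⟪S x, x⟫_𝕜 ≤ RCLike.re ⟪T x, x⟫_𝕜 := by
  have := ((le_def S T).mp h).re_inner_nonneg_left x
  rwa [sub_apply, inner_sub_left, map_sub, sub_nonneg] at this

theorem re_inner_algebraMap_add_smul_apply [NormedSpace ℝ E] [IsScalarTower ℝ 𝕜 E]
    (T : E →L[𝕜] E) (α β : ℝ) (x : E) :
    RCLike.re ⟪(algebraMap ℝ (E →L[𝕜] E) α + β • T) x, x⟫_𝕜
      = α * ‖x‖ ^ 2 + β * RCLike.re ⟪T x, x⟫_𝕜 := by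
  rw [Algebra.algebraMap_eq_smul_one, add_apply, smul_apply, smul_apply, one_apply_eq_self,
    inner_add_left, ← algebraMap_smul 𝕜 α, ← algebraMap_smul 𝕜 β, inner_smul_left,
    inner_smul_left]
  simp

end ContinuousLinearMap

/-- McCarthy inequality: for a positive operator `A` and `0 < p < 1`,
`⟨A^p x, x⟩ ≤ ‖x‖^(2(1-p)) ⟨A x, x⟩^p`. -/
theorem mccarthy_le {H : Type*} [NormedAddCommGroup H] [InnerProductSpace ℂ H]
    [CompleteSpace H] (A : H →L[ℂ] H) (hA : 0 ≤ A) (x : H) (p : ℝ)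
    (hp0 : 0 < p) (hp1 : p < 1) :
    (⟪(CFC.rpow A p) x, x⟫_ℂ).re ≤ ‖x‖ ^ (2 * (1 - p)) * (⟪A x, x⟫_ℂ).re ^ p := by
  rcases eq_or_ne x 0 with rfl | hx
  · simp [Real.zero_rpow (by linarith : 2 * (1 - p) ≠ 0), Real.zero_rpow hp0.ne']
  have hnorm : ‖x‖ ^ (2 * (1 - p)) = (‖x‖ ^ 2) ^ (1 - p) := by
    rw [Real.rpow_mul (norm_nonneg x)]; norm_cast
  rw [hnorm]
  refine Real.le_rpow_mul_rpow_of_forall_le_tangent (by positivity)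
    (((ContinuousLinearMap.nonneg_iff_isPositive A).mp hA).re_inner_nonneg_left x) hp0
    fun l hl => ?_
  calc (⟪(CFC.rpow A p) x, x⟫_ℂ).re
      ≤ (⟪(algebraMap ℝ (H →L[ℂ] H) ((1 - p) * l ^ p) + (p * l ^ (p - 1)) • A) x, x⟫_ℂ).re :=
        ContinuousLinearMap.re_inner_le_of_le (CFC.rpow_le_tangent hA hl hp0.le hp1.le) x
    _ = (1 - p) * l ^ p * ‖x‖ ^ 2 + p * l ^ (p - 1) * (⟪A x, x⟫_ℂ).re := by
        simpa only [RCLike.re_to_complex] using A.re_inner_algebraMap_add_smul_apply _ _ x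
end

section
/- Let T = [[0, B],[C, 0]] on H₁ ⊕ H₂. Then for any α ∈ [0,1] and p ≥ 1: ber(T)^p ≤ (1/4)‖|B|^(2pα) + |B|^(2p(1-α))‖ + (1/4)‖|C|^(2pα) + |C|^(2p(1-α))‖. -/
/-!
For a unit vector `z = (x, y)`, `|⟪T z, z⟫| ≤ (‖B‖ + ‖C‖) ‖x‖ ‖y‖ ≤ (‖B‖ + ‖C‖) / 2`, so by
convexity of `t ↦ t ^ p`, `ber(T) ^ p ≤ (‖B‖ ^ p + ‖C‖ ^ p) / 2`. On the other side, `t ↦ t ^ u + t ^ v`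
is monotone on `[0, ∞)`, so for `a ≥ 0` the norm of `a ^ u + a ^ v` is attained at the top of the
spectrum: `‖a ^ u + a ^ v‖ = ‖a‖ ^ u + ‖a‖ ^ v ≥ 2 ‖a‖ ^ ((u + v) / 2)` by AM-GM. Apply this to
`a = |B|` and `a = |C|`, whose norms are `‖B‖` and `‖C‖`.
-/

open scoped InnerProductSpace NNReal

lemma add_div_two_rpow_le {b c p : ℝ} (hb : 0 ≤ b) (hc : 0 ≤ c) (hp : 1 ≤ p) :
    ((b + c) / 2) ^ p ≤ (b ^ p + c ^ p) / 2 := by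
  have convex := (convexOn_rpow hp).2 (Set.mem_Ici.2 hb) (Set.mem_Ici.2 hc)
    (by norm_num : (0 : ℝ) ≤ 1 / 2) (by norm_num : (0 : ℝ) ≤ 1 / 2) (by norm_num)
  simp only [smul_eq_mul] at convex
  rw [show (b + c) / 2 = 1 / 2 * b + 1 / 2 * c by ring]
  linarith

lemma two_mul_rpow_le_rpow_add_rpow {x u v p : ℝ} (hx : 0 ≤ x) (hu : 0 ≤ u) (hv : 0 ≤ v)
    (huv : u + v = 2 * p) : 2 * x ^ p ≤ x ^ u + x ^ v := by
  have amgm := Real.geom_mean_le_arith_mean2_weighted (w₁ := 1 / 2) (w₂ := 1 / 2)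
    (by norm_num) (by norm_num) (Real.rpow_nonneg hx u) (Real.rpow_nonneg hx v) (by norm_num)
  rw [← Real.rpow_mul hx, ← Real.rpow_mul hx,
    ← Real.rpow_add_of_nonneg hx (by positivity) (by positivity),
    show u * (1 / 2) + v * (1 / 2) = p by linarith] at amgm
  linarith

namespace CFC

variable {A : Type*} [NormedRing A] [StarRing A] [NormedAlgebra ℝ A] [PartialOrder A]
  [StarOrderedRing A] [NonnegSpectrumClass ℝ A]
  [IsometricContinuousFunctionalCalculus ℝ A IsSelfAdjoint]

lemma norm_rpow_add_rpow [Nontrivial A] (a : A) {u v : ℝ} (hu : 0 ≤ u) (hv : 0 ≤ v)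
    (ha : 0 ≤ a := by cfc_tac) : ‖rpow a u + rpow a v‖ = ‖a‖ ^ u + ‖a‖ ^ v := by
  have hcu := (NNReal.continuous_rpow_const hu).continuousOn (s := spectrum ℝ≥0 a)
  have hcv := (NNReal.continuous_rpow_const hv).continuousOn (s := spectrum ℝ≥0 a)
  have hmono : Monotone fun x : ℝ≥0 => x ^ u + x ^ v :=
    (NNReal.monotone_rpow_of_nonneg hu).add (NNReal.monotone_rpow_of_nonneg hv)
  have hnorm := hmono.monotoneOn (spectrum ℝ≥0 a) |>.nnnorm_cfc _ a (hcu.add hcv) ha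
  rw [rpow, rpow, ← cfc_add a _ _ hcu hcv, ← coe_nnnorm, hnorm]
  simp

lemma two_mul_norm_rpow_le_norm_rpow_add_rpow (a : A) {u v p : ℝ} (hu : 0 ≤ u) (hv : 0 ≤ v)
    (huv : u + v = 2 * p) (hp : 0 < p) (ha : 0 ≤ a := by cfc_tac) :
    2 * ‖a‖ ^ p ≤ ‖rpow a u + rpow a v‖ := by
  rcases subsingleton_or_nontrivial A with hA | hA
  · rw [Subsingleton.elim a 0, norm_zero, Real.zero_rpow hp.ne', mul_zero]
    exact norm_nonneg _
  · rw [norm_rpow_add_rpow a hu hv ha]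
    exact two_mul_rpow_le_rpow_add_rpow (norm_nonneg a) hu hv huv

end CFC

lemma ContinuousLinearMap.norm_sqrt_adjoint_comp_self {H K : Type*}
    [NormedAddCommGroup H] [InnerProductSpace ℂ H] [CompleteSpace H]
    [NormedAddCommGroup K] [InnerProductSpace ℂ K] [CompleteSpace K] (B : K →L[ℂ] H) :
    ‖CFC.sqrt (adjoint B ∘L B)‖ = ‖B‖ := by
  have hpos : 0 ≤ adjoint B ∘L B := by
    rw [nonneg_iff_isPositive]
    exact isPositive_adjoint_comp_self B
  rw [CFC.norm_sqrt _ hpos, norm_adjoint_comp_self, Real.sqrt_mul_self (norm_nonneg B)]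

lemma WithLp.prod_norm_fst_mul_norm_snd_le {E F : Type*} [SeminormedAddCommGroup E]
    [SeminormedAddCommGroup F] (z : WithLp 2 (E × F)) : ‖z.fst‖ * ‖z.snd‖ ≤ ‖z‖ ^ 2 / 2 := by
  rw [WithLp.prod_norm_sq_eq_of_L2]
  linarith [two_mul_le_add_sq ‖z.fst‖ ‖z.snd‖]

lemma norm_inner_offDiag_le {H₁ H₂ : Type*}
    [NormedAddCommGroup H₁] [InnerProductSpace ℂ H₁] [NormedAddCommGroup H₂] [InnerProductSpace ℂ H₂]
    (B : H₂ →L[ℂ] H₁) (C : H₁ →L[ℂ] H₂) (z : WithLp 2 (H₁ × H₂)) :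
    ‖⟪(WithLp.equiv 2 (H₁ × H₂)).symm
        (B (WithLp.equiv 2 (H₁ × H₂) z).2, C (WithLp.equiv 2 (H₁ × H₂) z).1), z⟫_ℂ‖ ≤
      (‖B‖ + ‖C‖) / 2 * ‖z‖ ^ 2 := by
  rw [WithLp.prod_inner_apply]
  calc _ ≤ ‖⟪B z.snd, z.fst⟫_ℂ‖ + ‖⟪C z.fst, z.snd⟫_ℂ‖ := norm_add_le _ _
    _ ≤ ‖B‖ * ‖z.snd‖ * ‖z.fst‖ + ‖C‖ * ‖z.fst‖ * ‖z.snd‖ := by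
      gcongr
      · exact norm_inner_le_norm _ _ |>.trans (by gcongr; exact B.le_opNorm _)
      · exact norm_inner_le_norm _ _ |>.trans (by gcongr; exact C.le_opNorm _)
    _ = (‖B‖ + ‖C‖) * (‖z.fst‖ * ‖z.snd‖) := by ring
    _ ≤ (‖B‖ + ‖C‖) / 2 * ‖z‖ ^ 2 := by
      rw [div_mul_comm, mul_comm _ (‖B‖ + ‖C‖)]
      gcongr
      exact (WithLp.prod_norm_fst_mul_norm_snd_le z).trans_eq (by ring)

/-- For `T = [[0, B],[C, 0]]` on `H₁ ⊕ H₂`, `α ∈ [0,1]` and `p ≥ 1`: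
`ber(T)^p ≤ (1/4)‖|B|^(2pα) + |B|^(2p(1-α))‖ + (1/4)‖|C|^(2pα) + |C|^(2p(1-α))‖`. -/
theorem ber_offdiag_pow_le {H₁ H₂ : Type*}
    [NormedAddCommGroup H₁] [InnerProductSpace ℂ H₁] [CompleteSpace H₁]
    [NormedAddCommGroup H₂] [InnerProductSpace ℂ H₂] [CompleteSpace H₂]
    {Ω : Type*} (k : Ω → WithLp 2 (H₁ × H₂)) (hk : ∀ lam, ‖k lam‖ = 1)
    (B : H₂ →L[ℂ] H₁) (C : H₁ →L[ℂ] H₂)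
    (T : WithLp 2 (H₁ × H₂) →L[ℂ] WithLp 2 (H₁ × H₂))
    (hT : ∀ z, T z = (WithLp.equiv 2 (H₁ × H₂)).symm
      (B (WithLp.equiv 2 (H₁ × H₂) z).2, C (WithLp.equiv 2 (H₁ × H₂) z).1))
    (α p : ℝ) (hα : α ∈ Set.Icc (0 : ℝ) 1) (hp : 1 ≤ p) :
    (let absB : H₂ →L[ℂ] H₂ := CFC.sqrt ((ContinuousLinearMap.adjoint B) ∘L B)
     let absC : H₁ →L[ℂ] H₁ := CFC.sqrt ((ContinuousLinearMap.adjoint C) ∘L C)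
     (⨆ lam, ‖⟪T (k lam), k lam⟫_ℂ‖) ^ p ≤
      (1 / 4) * ‖CFC.rpow absB (2 * p * α) + CFC.rpow absB (2 * p * (1 - α))‖ +
      (1 / 4) * ‖CFC.rpow absC (2 * p * α) + CFC.rpow absC (2 * p * (1 - α))‖) := by
  intro absB absC
  obtain ⟨hα0, hα1⟩ := hα
  have hu : 0 ≤ 2 * p * α := by nlinarith
  have hv : 0 ≤ 2 * p * (1 - α) := by nlinarith
  have huv : 2 * p * α + 2 * p * (1 - α) = 2 * p := by ring
  have hber : (⨆ lam, ‖⟪T (k lam), k lam⟫_ℂ‖) ≤ (‖B‖ + ‖C‖) / 2 :=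
    Real.iSup_le (fun lam => by simpa [hT, hk] using norm_inner_offDiag_le B C (k lam))
      (by positivity)
  have hB : 2 * ‖B‖ ^ p ≤ ‖CFC.rpow absB (2 * p * α) + CFC.rpow absB (2 * p * (1 - α))‖ := by
    simpa only [absB, ContinuousLinearMap.norm_sqrt_adjoint_comp_self] using
      CFC.two_mul_norm_rpow_le_norm_rpow_add_rpow absB hu hv huv (by linarith)
  have hC : 2 * ‖C‖ ^ p ≤ ‖CFC.rpow absC (2 * p * α) + CFC.rpow absC (2 * p * (1 - α))‖ := by
    simpa only [absC, ContinuousLinearMap.norm_sqrt_adjoint_comp_self] using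
      CFC.two_mul_norm_rpow_le_norm_rpow_add_rpow absC hu hv huv (by linarith)
  calc (⨆ lam, ‖⟪T (k lam), k lam⟫_ℂ‖) ^ p
      ≤ ((‖B‖ + ‖C‖) / 2) ^ p :=
        Real.rpow_le_rpow (Real.iSup_nonneg fun _ => norm_nonneg _) hber (by linarith)
    _ ≤ (‖B‖ ^ p + ‖C‖ ^ p) / 2 := add_div_two_rpow_le (norm_nonneg B) (norm_nonneg C) hp
    _ ≤ _ := by linarith
end

section
/- Let A₁, …, A_k be bounded operators on a RKHS with Cartesian decompositions A_n = B_n + i C_n (B_n, C_n self-adjoint), and p ≥ 1. Then ber(∑_{n=1}^k A_n)^p ≤ (√2 k)^(p-1) sup_λ [ ∑_{n=1}^k ( ⟨|B_n|^(2p) k̂_λ, k̂_λ⟩ + ⟨|C_n|^(2p) k̂_λ, k̂_λ⟩ )^(1/2) ]. -/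
/-!
Fix a unit vector `x` and put `bₙ = ⟪Bₙ x, x⟫`, `cₙ = ⟪Cₙ x, x⟫`. Both are real, so
`|⟪Aₙ x, x⟫|² = |bₙ|² + |cₙ|²`. The triangle inequality and the power mean inequality give
`|⟪(∑ Aₙ) x, x⟫|^p ≤ k^(p-1) ∑ₙ (|bₙ|² + |cₙ|²)^(p/2)`, and convexity of `t ↦ t^p` bounds each term
by `(2^(p-1) (|bₙ|^(2p) + |cₙ|^(2p)))^(1/2)`. Finally
`|⟪T x, x⟫|^(2p) ≤ ‖T x‖^(2p) = ⟪T*T x, x⟫^p ≤ ⟪(T*T)^p x, x⟫ = ⟪|T|^(2p) x, x⟫`, the middle step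
being McCarthy's inequality: apply the functional calculus to the tangent line of `t ↦ t^p` at
`⟪T*T x, x⟫`. Taking suprema over `λ` gives the theorem.
-/

open scoped InnerProductSpace

namespace Real

theorem rpow_add_tangent_le_rpow {a t p : ℝ} (ha : 0 ≤ a) (ht : 0 ≤ t) (hp : 1 ≤ p) :
    a ^ p + p * a ^ (p - 1) * (t - a) ≤ t ^ p := by
  rcases ha.eq_or_lt with rfl | ha
  · rcases hp.eq_or_lt with rfl | hp
    · simp
    · simp [zero_rpow (by linarith : p ≠ 0), zero_rpow (by linarith : p - 1 ≠ 0), rpow_nonneg ht]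
  · have bernoulli := one_add_mul_self_le_rpow_one_add (s := t / a - 1)
      (by linarith [div_nonneg ht ha.le]) hp
    rw [add_sub_cancel, div_rpow ht ha.le, le_div_iff₀ (rpow_pos_of_pos ha p)] at bernoulli
    calc a ^ p + p * a ^ (p - 1) * (t - a) = (1 + p * (t / a - 1)) * a ^ p := by
          rw [rpow_sub_one ha.ne']; field_simp
      _ ≤ t ^ p := bernoulli

theorem sqrt_rpow_comm {x : ℝ} (hx : 0 ≤ x) (p : ℝ) : √x ^ p = √(x ^ p) := by
  rw [← rpow_div_two_eq_sqrt _ hx, sqrt_eq_rpow, ← rpow_mul hx]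
  ring_nf

theorem sqrt_add_rpow_le {u v p : ℝ} (hu : 0 ≤ u) (hv : 0 ≤ v) (hp : 1 ≤ p) :
    √(u + v) ^ p ≤ √2 ^ (p - 1) * √(u ^ p + v ^ p) := by
  have h : (u + v) ^ p ≤ 2 ^ (p - 1) * (u ^ p + v ^ p) := by
    exact_mod_cast NNReal.rpow_add_le_mul_rpow_add_rpow ⟨u, hu⟩ ⟨v, hv⟩ hp
  rw [sqrt_rpow_comm (by positivity), sqrt_rpow_comm zero_le_two, ← sqrt_mul (by positivity)]
  exact sqrt_le_sqrt h

theorem rpow_iSup_le_mul_iSup {ι : Type*} {f g : ι → ℝ} (hf : ∀ i, 0 ≤ f i) (hg : ∀ i, 0 ≤ g i)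
    (hg_bdd : BddAbove (Set.range g)) {c p : ℝ} (hc : 0 ≤ c) (hp : 0 < p)
    (h : ∀ i, f i ^ p ≤ c * g i) : (⨆ i, f i) ^ p ≤ c * ⨆ i, g i := by
  have hM : 0 ≤ c * ⨆ i, g i := mul_nonneg hc (iSup_nonneg hg)
  rw [← le_rpow_inv_iff_of_pos (iSup_nonneg hf) hM hp]
  refine Real.iSup_le (fun i => (le_rpow_inv_iff_of_pos (hf i) hM hp).2 ?_) (by positivity)
  exact (h i).trans (by gcongr; exact le_ciSup hg_bdd i)

end Real

theorem CFC.abs_rpow_two_mul {A : Type*} [CStarAlgebra A] [PartialOrder A] [StarOrderedRing A]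
    (a : A) {p : ℝ} (hp : 0 ≤ p) : CFC.abs a ^ (2 * p) = (star a * a) ^ p := by
  have h := CFC.rpow_sqrt_nnreal (a := star a * a) (x := (2 * p).toNNReal)
  rwa [Real.coe_toNNReal _ (by positivity), mul_div_cancel_left₀ _ two_ne_zero] at h

namespace ContinuousLinearMap

variable {H : Type*} [NormedAddCommGroup H] [InnerProductSpace ℂ H]

theorem re_inner_le_re_inner_of_le {T S : H →L[ℂ] H} (h : T ≤ S) (x : H) :
    (⟪T x, x⟫_ℂ).re ≤ (⟪S x, x⟫_ℂ).re := by
  simpa [inner_sub_left] using h.re_inner_nonneg_left x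

theorem re_inner_apply_self_le_opNorm (T : H →L[ℂ] H) {x : H} (hx : ‖x‖ = 1) :
    (⟪T x, x⟫_ℂ).re ≤ ‖T‖ :=
  calc (⟪T x, x⟫_ℂ).re ≤ ‖T x‖ * ‖x‖ :=
        (Complex.re_le_norm _).trans (norm_inner_le_norm _ _)
    _ ≤ ‖T‖ * ‖x‖ * ‖x‖ := by gcongr; exact T.le_opNorm x
    _ = ‖T‖ := by rw [hx, mul_one, mul_one]

variable [CompleteSpace H]

theorem re_inner_apply_self_rpow_le {T : H →L[ℂ] H} (hT : 0 ≤ T) {x : H} (hx : ‖x‖ = 1)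
    {p : ℝ} (hp : 1 ≤ p) : (⟪T x, x⟫_ℂ).re ^ p ≤ (⟪(T ^ p) x, x⟫_ℂ).re := by
  set a := (⟪T x, x⟫_ℂ).re
  have ha : 0 ≤ a := by simpa using hT.re_inner_nonneg_left x
  set c := p * a ^ (p - 1)
  have tangent : cfc (fun t : ℝ => a ^ p + c * (t - a)) T ≤ T ^ p := by
    rw [CFC.rpow_eq_cfc_real hT]
    exact cfc_mono (fun t ht => Real.rpow_add_tangent_le_rpow ha
      (spectrum_nonneg_of_nonneg hT ht) hp) (by fun_prop)
      (Real.continuous_rpow_const (by linarith)).continuousOn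
  have affine : cfc (fun t : ℝ => a ^ p + c * (t - a)) T =
      algebraMap ℝ _ (a ^ p - c * a) + c • T := by
    rw [← cfc_const_mul_id _ T, ← cfc_const _ T, ← cfc_add ..]
    congr 1; ext t; ring
  calc a ^ p = (⟪(algebraMap ℝ _ (a ^ p - c * a) + c • T) x, x⟫_ℂ).re := by
        simp [Algebra.algebraMap_eq_smul_one, hx, a]
    _ ≤ _ := affine ▸ re_inner_le_re_inner_of_le tangent x

theorem norm_inner_sq_rpow_le (T : H →L[ℂ] H) {x : H} (hx : ‖x‖ = 1) {p : ℝ} (hp : 1 ≤ p) :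
    (‖⟪T x, x⟫_ℂ‖ ^ 2) ^ p ≤ (⟪(CFC.abs T ^ (2 * p)) x, x⟫_ℂ).re := by
  have cauchy_schwarz : ‖⟪T x, x⟫_ℂ‖ ≤ ‖T x‖ := by
    simpa [hx] using norm_inner_le_norm (T x) x
  have norm_sq : ‖T x‖ ^ 2 = (⟪(star T * T) x, x⟫_ℂ).re :=
    apply_norm_sq_eq_inner_adjoint_left T x
  calc (‖⟪T x, x⟫_ℂ‖ ^ 2) ^ p ≤ (‖T x‖ ^ 2) ^ p := by gcongr
    _ ≤ (⟪((star T * T) ^ p) x, x⟫_ℂ).re := by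
        rw [norm_sq]; exact re_inner_apply_self_rpow_le (star_mul_self_nonneg T) hx hp
    _ = (⟪(CFC.abs T ^ (2 * p)) x, x⟫_ℂ).re := by rw [CFC.abs_rpow_two_mul T (by linarith)]

theorem norm_inner_cartesian_sq {B C : H →L[ℂ] H} (hB : IsSelfAdjoint B) (hC : IsSelfAdjoint C)
    (x : H) : ‖⟪(B + Complex.I • C) x, x⟫_ℂ‖ ^ 2 = ‖⟪B x, x⟫_ℂ‖ ^ 2 + ‖⟪C x, x⟫_ℂ‖ ^ 2 := by
  have hb : ((⟪B x, x⟫_ℂ).re : ℂ) = ⟪B x, x⟫_ℂ := hB.isSymmetric.coe_re_inner_apply_self x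
  have hc : ((⟪C x, x⟫_ℂ).re : ℂ) = ⟪C x, x⟫_ℂ := hC.isSymmetric.coe_re_inner_apply_self x
  rw [add_apply, smul_apply, inner_add_left, inner_smul_left, Complex.conj_I, ← hb, ← hc,
    show -Complex.I * ((⟪C x, x⟫_ℂ).re : ℂ) = ((-(⟪C x, x⟫_ℂ).re : ℝ) : ℂ) * Complex.I by
      push_cast; ring]
  simp only [Complex.sq_norm, Complex.normSq_add_mul_I, Complex.normSq_ofReal]
  ring

theorem norm_inner_cartesian_rpow_le {B C : H →L[ℂ] H} (hB : IsSelfAdjoint B)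
    (hC : IsSelfAdjoint C) {x : H} (hx : ‖x‖ = 1) {p : ℝ} (hp : 1 ≤ p) :
    ‖⟪(B + Complex.I • C) x, x⟫_ℂ‖ ^ p ≤ √2 ^ (p - 1) *
      √((⟪(CFC.abs B ^ (2 * p)) x, x⟫_ℂ).re + (⟪(CFC.abs C ^ (2 * p)) x, x⟫_ℂ).re) := by
  have norm_eq : ‖⟪(B + Complex.I • C) x, x⟫_ℂ‖ = √(‖⟪B x, x⟫_ℂ‖ ^ 2 + ‖⟪C x, x⟫_ℂ‖ ^ 2) := by
    rw [← norm_inner_cartesian_sq hB hC, Real.sqrt_sq (norm_nonneg _)]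
  rw [norm_eq]
  refine (Real.sqrt_add_rpow_le (by positivity) (by positivity) hp).trans ?_
  gcongr
  · exact norm_inner_sq_rpow_le B hx hp
  · exact norm_inner_sq_rpow_le C hx hp

theorem norm_inner_sum_cartesian_rpow_le {ι : Type*} [Fintype ι] (A B C : ι → H →L[ℂ] H)
    (hB : ∀ n, IsSelfAdjoint (B n)) (hC : ∀ n, IsSelfAdjoint (C n))
    (hA : ∀ n, A n = B n + Complex.I • C n) {x : H} (hx : ‖x‖ = 1) {p : ℝ} (hp : 1 ≤ p) :
    ‖⟪(∑ n, A n) x, x⟫_ℂ‖ ^ p ≤ (√2 * Fintype.card ι) ^ (p - 1) * ∑ n,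
      √((⟪(CFC.abs (B n) ^ (2 * p)) x, x⟫_ℂ).re + (⟪(CFC.abs (C n) ^ (2 * p)) x, x⟫_ℂ).re) := by
  have triangle : ‖⟪(∑ n, A n) x, x⟫_ℂ‖ ≤ ∑ n, ‖⟪A n x, x⟫_ℂ‖ := by
    rw [sum_apply, sum_inner]
    exact norm_sum_le _ _
  calc ‖⟪(∑ n, A n) x, x⟫_ℂ‖ ^ p ≤ (∑ n, ‖⟪A n x, x⟫_ℂ‖) ^ p := by gcongr
    _ ≤ (Fintype.card ι : ℝ) ^ (p - 1) * ∑ n, ‖⟪A n x, x⟫_ℂ‖ ^ p := by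
        simpa using Real.rpow_sum_le_const_mul_sum_rpow_of_nonneg Finset.univ hp
          fun n _ => norm_nonneg ⟪A n x, x⟫_ℂ
    _ ≤ (Fintype.card ι : ℝ) ^ (p - 1) * ∑ n, √2 ^ (p - 1) *
          √((⟪(CFC.abs (B n) ^ (2 * p)) x, x⟫_ℂ).re + (⟪(CFC.abs (C n) ^ (2 * p)) x, x⟫_ℂ).re) := by
        gcongr with n
        rw [hA n]
        exact norm_inner_cartesian_rpow_le (hB n) (hC n) hx hp
    _ = _ := by
        rw [← Finset.mul_sum, Real.mul_rpow (by positivity) (by positivity)]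
        ring

end ContinuousLinearMap

/-- Berezin number bound via Cartesian decompositions `Aₙ = Bₙ + iCₙ`:
`ber(∑ Aₙ)^p ≤ (√2 k)^(p-1) sup_λ ∑ₙ (⟨|Bₙ|^(2p) k̂_λ, k̂_λ⟩ + ⟨|Cₙ|^(2p) k̂_λ, k̂_λ⟩)^(1/2)`. -/
theorem ber_sum_cartesian {H : Type*} [NormedAddCommGroup H] [InnerProductSpace ℂ H]
    [CompleteSpace H] {Ω : Type*} (kv : Ω → H) (hkv : ∀ lam, ‖kv lam‖ = 1)
    (k : ℕ) (A B C : Fin k → (H →L[ℂ] H))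
    (hB : ∀ n, IsSelfAdjoint (B n)) (hC : ∀ n, IsSelfAdjoint (C n))
    (hA : ∀ n, A n = B n + Complex.I • C n) (p : ℝ) (hp : 1 ≤ p) :
    (let absPow : (H →L[ℂ] H) → ℝ → (H →L[ℂ] H) :=
       fun T q => CFC.rpow (CFC.sqrt (star T * T)) q
     (⨆ lam, ‖⟪(∑ n, A n) (kv lam), kv lam⟫_ℂ‖) ^ p ≤
      (Real.sqrt 2 * k) ^ (p - 1) *
        ⨆ lam, ∑ n, Real.sqrt
          ((⟪(absPow (B n) (2 * p)) (kv lam), kv lam⟫_ℂ).re +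
            (⟪(absPow (C n) (2 * p)) (kv lam), kv lam⟫_ℂ).re)) := by
  intro absPow
  have abs_eq : ∀ T, absPow T (2 * p) = CFC.abs T ^ (2 * p) := fun _ => rfl
  simp only [abs_eq]
  refine Real.rpow_iSup_le_mul_iSup (fun _ => norm_nonneg _) (fun _ => ?_) ?_ ?_ (by linarith)
    fun lam => ?_
  · positivity
  · exact ⟨_, Set.forall_mem_range.2 fun lam => Finset.sum_le_sum fun n _ => Real.sqrt_le_sqrt
      (add_le_add (ContinuousLinearMap.re_inner_apply_self_le_opNorm _ (hkv lam))
        (ContinuousLinearMap.re_inner_apply_self_le_opNorm _ (hkv lam)))⟩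
  · positivity
  · simpa only [Fintype.card_fin] using
      ContinuousLinearMap.norm_inner_sum_cartesian_rpow_le A B C hB hC hA (hkv lam) hp
end
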